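/- Let n ≥ 1, s ∈ (0,1), and u : ℝⁿ → ℝ with finite Gagliardo seminorm. If both the positive part u⁺ and the negative part u⁻ are nontrivial (i.e. each is nonzero on a set of positive measure), then the strict inequality [|u|]_s < [u]_s holds, where [v]_s² = ∬ |v(x)-v(y)|²/|x-y|^{n+2s} dx dy. -/

import Mathlib

/-!
Pointwise `(|a| - |b|)² ≤ (a - b)²`, strictly when `a > 0 > b`. The product `{u > 0} × {u < 0}`
has positive measure and misses the diagonal, where the weight `‖x - y‖ ^ r` is positive, so the
integrands differ strictly on a non-null set; as the energy of `u` is finite, so do the integrals.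
-/

open MeasureTheory

lemma sq_abs_sub_abs_le_sq_sub (a b : ℝ) : (|a| - |b|) ^ 2 ≤ (a - b) ^ 2 :=
  sq_le_sq.mpr (abs_abs_sub_abs_le_abs_sub a b)

lemma sq_abs_sub_abs_lt_sq_sub {a b : ℝ} (ha : 0 < a) (hb : b < 0) :
    (|a| - |b|) ^ 2 < (a - b) ^ 2 := by
  rw [abs_of_pos ha, abs_of_neg hb]
  nlinarith [mul_neg_of_pos_of_neg ha hb]

lemma ofReal_sq_abs_sub_abs_div_le (a b : ℝ) {d : ℝ} (hd : 0 ≤ d) :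
    ENNReal.ofReal ((|a| - |b|) ^ 2 / d) ≤ ENNReal.ofReal ((a - b) ^ 2 / d) :=
  ENNReal.ofReal_le_ofReal (div_le_div_of_nonneg_right (sq_abs_sub_abs_le_sq_sub a b) hd)

/-- `[u]_s²` in the notation of the paper, for `μ` Lebesgue measure and `r = n + 2s`. -/
noncomputable def gagliardoEnergy {E : Type*} [NormedAddCommGroup E] [MeasurableSpace E]
    (μ : Measure E) (r : ℝ) (u : E → ℝ) : ENNReal :=
  ∫⁻ p : E × E, ENNReal.ofReal ((u p.1 - u p.2) ^ 2 / ‖p.1 - p.2‖ ^ r) ∂μ.prod μ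

section gagliardoEnergy

variable {E : Type*} [NormedAddCommGroup E] [MeasurableSpace E]

lemma gagliardoEnergy_abs_le (μ : Measure E) (r : ℝ) (u : E → ℝ) :
    gagliardoEnergy μ r (fun x ↦ |u x|) ≤ gagliardoEnergy μ r u :=
  lintegral_mono fun _ ↦ ofReal_sq_abs_sub_abs_div_le _ _ (by positivity)

lemma gagliardoEnergy_abs_lt [OpensMeasurableSpace E] [MeasurableSub₂ E]
    {μ : Measure E} [SFinite μ] {r : ℝ} {u : E → ℝ} (hu : Measurable u)
    (hfin : gagliardoEnergy μ r u ≠ ⊤) (hpos : μ {x | 0 < u x} ≠ 0)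
    (hneg : μ {x | u x < 0} ≠ 0) :
    gagliardoEnergy μ r (fun x ↦ |u x|) < gagliardoEnergy μ r u := by
  have hmeas : Measurable fun p : E × E ↦
      ENNReal.ofReal ((u p.1 - u p.2) ^ 2 / ‖p.1 - p.2‖ ^ r) := by
    fun_prop
  have hS : μ.prod μ ({x | 0 < u x} ×ˢ {x | u x < 0}) ≠ 0 := by
    rw [Measure.prod_prod]
    exact mul_ne_zero hpos hneg
  refine lintegral_strict_mono_of_ae_le_of_ae_lt_on hmeas.aemeasurable
    ((gagliardoEnergy_abs_le μ r u).trans_lt hfin.lt_top).ne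
    (ae_of_all _ fun _ ↦ ofReal_sq_abs_sub_abs_div_le _ _ (by positivity))
    hS (ae_of_all _ fun p ⟨h1, h2⟩ ↦ ?_)
  have hne : p.1 ≠ p.2 := ne_of_apply_ne u (h2.trans h1).ne'
  have hd : 0 < ‖p.1 - p.2‖ ^ r := Real.rpow_pos_of_pos (norm_pos_iff.2 (sub_ne_zero.2 hne)) r
  exact (ENNReal.ofReal_lt_ofReal_iff_of_nonneg (by positivity)).2 <|
    div_lt_div_of_pos_right (sq_abs_sub_abs_lt_sq_sub h1 h2) hd

end gagliardoEnergy

theorem gagliardo_abs_lt_general (n : ℕ) (s : ℝ)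
    (u : EuclideanSpace ℝ (Fin n) → ℝ) (hmeas : Measurable u)
    (hfin : ∫⁻ p : EuclideanSpace ℝ (Fin n) × EuclideanSpace ℝ (Fin n),
        ENNReal.ofReal ((u p.1 - u p.2) ^ 2 / ‖p.1 - p.2‖ ^ ((n : ℝ) + 2 * s)) < ⊤)
    (hpos : 0 < volume {x | 0 < u x}) (hneg : 0 < volume {x | u x < 0}) :
    ∫⁻ p : EuclideanSpace ℝ (Fin n) × EuclideanSpace ℝ (Fin n),
        ENNReal.ofReal ((|u p.1| - |u p.2|) ^ 2 / ‖p.1 - p.2‖ ^ ((n : ℝ) + 2 * s))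
      < ∫⁻ p : EuclideanSpace ℝ (Fin n) × EuclideanSpace ℝ (Fin n),
          ENNReal.ofReal ((u p.1 - u p.2) ^ 2 / ‖p.1 - p.2‖ ^ ((n : ℝ) + 2 * s)) :=
  gagliardoEnergy_abs_lt hmeas hfin.ne hpos.ne' hneg.ne'

/-- Strict decrease of the Gagliardo seminorm under absolute value for genuinely
sign-changing functions: if both `u⁺` and `u⁻` are nontrivial then `[|u|]_s < [u]_s`. -/
theorem gagliardo_abs_lt (n : ℕ) (hn : 1 ≤ n) (s : ℝ) (hs : s ∈ Set.Ioo (0:ℝ) 1)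
    (u : EuclideanSpace ℝ (Fin n) → ℝ) (hmeas : Measurable u)
    (hfin : ∫⁻ p : EuclideanSpace ℝ (Fin n) × EuclideanSpace ℝ (Fin n),
        ENNReal.ofReal ((u p.1 - u p.2) ^ 2 / ‖p.1 - p.2‖ ^ ((n : ℝ) + 2 * s)) < ⊤)
    (hpos : 0 < volume {x | 0 < u x}) (hneg : 0 < volume {x | u x < 0}) :
    ∫⁻ p : EuclideanSpace ℝ (Fin n) × EuclideanSpace ℝ (Fin n),
        ENNReal.ofReal ((|u p.1| - |u p.2|) ^ 2 / ‖p.1 - p.2‖ ^ ((n : ℝ) + 2 * s))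
      < ∫⁻ p : EuclideanSpace ℝ (Fin n) × EuclideanSpace ℝ (Fin n),
          ENNReal.ofReal ((u p.1 - u p.2) ^ 2 / ‖p.1 - p.2‖ ^ ((n : ℝ) + 2 * s)) :=
  gagliardo_abs_lt_general n s u hmeas hfin hpos hneg
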